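/- Every sequent derivable in GL_Seq is derivable in the non-well-founded system GL_∞. -/
import Mathlib


/-- Modal formulas in negation normal form. -/
inductive Fml : Type where
  | pos : ℕ → Fml
  | neg : ℕ → Fml
  | top : Fml
  | bot : Fml
  | and : Fml → Fml → Fml
  | or : Fml → Fml → Fml
  | box : Fml → Fml
  | dia : Fml → Fml
  deriving DecidableEq

/-- De Morgan negation. -/
def Fml.negation : Fml → Fml
  | .pos n => .neg n
  | .neg n => .pos n
  | .top => .bot
  | .bot => .top
  | .and A B => .or A.negation B.negation
  | .or A B => .and A.negation B.negation
  | .box A => .dia A.negation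
  | .dia A => .box A.negation

def Fml.imp (A B : Fml) : Fml := .or A.negation B
def Fml.biimp (A B : Fml) : Fml := .and (A.imp B) (B.imp A)
def Fml.boxdot (A : Fml) : Fml := .and A (.box A)

/-- Boolean evaluation, with modal subformulas evaluated via `m` (diamonds dually). -/
def Fml.eval (v : ℕ → Bool) (m : Fml → Bool) : Fml → Bool
  | .pos n => v n
  | .neg n => !(v n)
  | .top => true
  | .bot => false
  | .and A B => A.eval v m && B.eval v m
  | .or A B => A.eval v m || B.eval v m
  | .box A => m A
  | .dia A => !(m A.negation)

/-- Boolean tautologies. -/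
def Fml.Taut (A : Fml) : Prop := ∀ v m, A.eval v m = true

/-- The Hilbert system for Gödel–Löb logic GLH. -/
inductive GLH : Fml → Prop where
  | taut (A) : A.Taut → GLH A
  | distr (A B) : GLH ((Fml.box (A.imp B)).imp ((Fml.box A).imp (Fml.box B)))
  | lob (A) : GLH ((Fml.box ((Fml.box A).imp A)).imp (Fml.box A))
  | mp (A B) : GLH (A.imp B) → GLH A → GLH B
  | nec (A) : GLH A → GLH (Fml.box A)

/-- One-sided sequents: finite multisets of formulas. -/
abbrev Sequent := Multiset Fml

/-- Prefix every formula of a sequent with ◇. -/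
def diaS (Γ : Sequent) : Sequent := Γ.map Fml.dia

def listSharp : List Fml → Fml
  | [] => .bot
  | [A] => A
  | A :: l => .or A (listSharp l)

/-- Γ^♯ : the disjunction of the formulas of Γ (⊥ if Γ is empty). -/
noncomputable def sharp (Γ : Sequent) : Fml := listSharp Γ.toList

def listConj : List Fml → Fml
  | [] => .top
  | [A] => A
  | A :: l => .and A (listConj l)

/-- The sequent calculus GL_Seq. -/
inductive GLSeq : Sequent → Prop where
  | axA (Γ A) : GLSeq (A ::ₘ A.negation ::ₘ Γ)
  | axTop (Γ) : GLSeq (Fml.top ::ₘ Γ)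
  | andR {Γ A B} : GLSeq (A ::ₘ Γ) → GLSeq (B ::ₘ Γ) → GLSeq (Fml.and A B ::ₘ Γ)
  | orR {Γ A B} : GLSeq (A ::ₘ B ::ₘ Γ) → GLSeq (Fml.or A B ::ₘ Γ)
  | boxGL {Γ Δ A} : GLSeq (A ::ₘ Fml.dia A.negation ::ₘ (Γ + diaS Γ)) →
      GLSeq (Fml.box A ::ₘ (diaS Γ + Δ))

/-- One backward step of the K4-style rules: Γ is an initial sequent or the conclusion of
a rule all of whose premises lie in `S`. -/
def InfStep (S : Set Sequent) (Γ : Sequent) : Prop :=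
  (∃ Δ A, Γ = A ::ₘ Fml.negation A ::ₘ Δ) ∨
  (∃ Δ, Γ = Fml.top ::ₘ Δ) ∨
  (∃ Δ A B, Γ = Fml.and A B ::ₘ Δ ∧ (A ::ₘ Δ) ∈ S ∧ (B ::ₘ Δ) ∈ S) ∨
  (∃ Δ A B, Γ = Fml.or A B ::ₘ Δ ∧ (A ::ₘ B ::ₘ Δ) ∈ S) ∨
  (∃ Δ Θ A, Γ = Fml.box A ::ₘ (diaS Δ + Θ) ∧ (A ::ₘ (Δ + diaS Δ)) ∈ S)

/-- GL_∞ : Γ has a (possibly non-well-founded) proof in the K4-style system, coinductively: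
Γ belongs to some set of sequents each of which is an initial sequent or the conclusion
of a rule with premises in the set. -/
def GLInf (Γ : Sequent) : Prop := ∃ S : Set Sequent, Γ ∈ S ∧ ∀ Δ ∈ S, InfStep S Δ

/-- Circular derivability relative to a history of ancestor sequents available for back-links. -/
inductive GLCircAux : List Sequent → Sequent → Prop where
  | axA (H Γ A) : GLCircAux H (A ::ₘ A.negation ::ₘ Γ)
  | axTop (H Γ) : GLCircAux H (Fml.top ::ₘ Γ)
  | back {H Γ} : Γ ∈ H → GLCircAux H Γ
  | andR {H Γ A B} : GLCircAux ((Fml.and A B ::ₘ Γ) :: H) (A ::ₘ Γ) →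
      GLCircAux ((Fml.and A B ::ₘ Γ) :: H) (B ::ₘ Γ) → GLCircAux H (Fml.and A B ::ₘ Γ)
  | orR {H Γ A B} : GLCircAux ((Fml.or A B ::ₘ Γ) :: H) (A ::ₘ B ::ₘ Γ) →
      GLCircAux H (Fml.or A B ::ₘ Γ)
  | boxR {H Γ Δ A} : GLCircAux ((Fml.box A ::ₘ (diaS Γ + Δ)) :: H) (A ::ₘ (Γ + diaS Γ)) →
      GLCircAux H (Fml.box A ::ₘ (diaS Γ + Δ))

/-- GL_circ : circular proofs. -/
def GLCirc (Γ : Sequent) : Prop := GLCircAux [] Γ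

/-- Circular derivations with assumption leaves. `CircDer H b hs bhs Γ` : a circular
derivation of Γ, with ancestor history `H`, `b` true iff a □-rule occurs on the path from
the root, non-boxed assumption leaves `hs` and boxed assumption leaves `bhs`. -/
inductive CircDer : List Sequent → Bool → List Sequent → List Sequent → Sequent → Prop where
  | axA (H b Γ A) : CircDer H b [] [] (A ::ₘ A.negation ::ₘ Γ)
  | axTop (H b Γ) : CircDer H b [] [] (Fml.top ::ₘ Γ)
  | back {H Γ} (b) : Γ ∈ H → CircDer H b [] [] Γ
  | hypU (H Γ) : CircDer H false [Γ] [] Γ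
  | hypB (H Γ) : CircDer H true [] [Γ] Γ
  | andR {H b Γ A B hs₁ bhs₁ hs₂ bhs₂} :
      CircDer ((Fml.and A B ::ₘ Γ) :: H) b hs₁ bhs₁ (A ::ₘ Γ) →
      CircDer ((Fml.and A B ::ₘ Γ) :: H) b hs₂ bhs₂ (B ::ₘ Γ) →
      CircDer H b (hs₁ ++ hs₂) (bhs₁ ++ bhs₂) (Fml.and A B ::ₘ Γ)
  | orR {H b Γ A B hs bhs} :
      CircDer ((Fml.or A B ::ₘ Γ) :: H) b hs bhs (A ::ₘ B ::ₘ Γ) →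
      CircDer H b hs bhs (Fml.or A B ::ₘ Γ)
  | boxR {H b Γ Δ A hs bhs} :
      CircDer ((Fml.box A ::ₘ (diaS Γ + Δ)) :: H) true hs bhs (A ::ₘ (Γ + diaS Γ)) →
      CircDer H b hs bhs (Fml.box A ::ₘ (diaS Γ + Δ))

/-- Propositional atoms occurring in a formula. -/
def Fml.atoms : Fml → Finset ℕ
  | .pos n => {n}
  | .neg n => {n}
  | .top => ∅
  | .bot => ∅
  | .and A B => A.atoms ∪ B.atoms
  | .or A B => A.atoms ∪ B.atoms
  | .box A => A.atoms
  | .dia A => A.atoms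

/-- All literals occurring in a formula (a literal is an atom with a polarity). -/
def Fml.lits : Fml → Finset (ℕ × Bool)
  | .pos n => {(n, true)}
  | .neg n => {(n, false)}
  | .top => ∅
  | .bot => ∅
  | .and A B => A.lits ∪ B.lits
  | .or A B => A.lits ∪ B.lits
  | .box A => A.lits
  | .dia A => A.lits

/-- u(A) : literals occurring outside the scope of all modal operators. -/
def Fml.uvoc : Fml → Finset (ℕ × Bool)
  | .pos n => {(n, true)}
  | .neg n => {(n, false)}
  | .top => ∅
  | .bot => ∅
  | .and A B => A.uvoc ∪ B.uvoc
  | .or A B => A.uvoc ∪ B.uvoc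
  | .box _ => ∅
  | .dia _ => ∅

/-- v(A) : literals occurring within the scope of a modal operator (to be marked). -/
def Fml.vvoc : Fml → Finset (ℕ × Bool)
  | .and A B => A.vvoc ∪ B.vvoc
  | .or A B => A.vvoc ∪ B.vvoc
  | .box A => A.lits
  | .dia A => A.lits
  | _ => ∅

/-- w(A) = u(A) ∪ v(A)°, where the second Boolean component marks literals. -/
def Fml.wvoc (A : Fml) : Finset ((ℕ × Bool) × Bool) :=
  A.uvoc.image (fun L => (L, false)) ∪ A.vvoc.image (fun L => (L, true))

/-- w*(A) = w(A) ∪ w(A)°. -/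
def Fml.wstar (A : Fml) : Finset ((ℕ × Bool) × Bool) :=
  A.wvoc ∪ A.wvoc.image (fun p => (p.1, true))

section Semantics

/-- GL Kripke models: transitive, converse well-founded. -/
structure KModel where
  W : Type
  R : W → W → Prop
  trans : ∀ {a b c : W}, R a b → R b c → R a c
  cwf : WellFounded (fun a b => R b a)
  val : W → ℕ → Bool

def Sat (M : KModel) : M.W → Fml → Prop
  | w, .pos n => M.val w n = true
  | w, .neg n => ¬ (M.val w n = true)
  | _, .top => True
  | _, .bot => False
  | w, .and A B => Sat M w A ∧ Sat M w B
  | w, .or A B => Sat M w A ∨ Sat M w B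
  | w, .box A => ∀ v, M.R w v → Sat M v A
  | w, .dia A => ∃ v, M.R w v ∧ Sat M v A

lemma sat_negation (M : KModel) (A : Fml) : ∀ w, (Sat M w A.negation ↔ ¬ Sat M w A) := by
  induction A with
  | pos n => intro w; simp [Fml.negation, Sat]
  | neg n => intro w; simp [Fml.negation, Sat]
  | top => intro w; simp [Fml.negation, Sat]
  | bot => intro w; simp [Fml.negation, Sat]
  | and A B ihA ihB => intro w; simp only [Fml.negation, Sat, ihA, ihB]; tauto
  | or A B ihA ihB => intro w; simp only [Fml.negation, Sat, ihA, ihB]; tauto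
  | box A ih => intro w; simp only [Fml.negation, Sat, ih]; push_neg; rfl
  | dia A ih => intro w; simp only [Fml.negation, Sat, ih]; push_neg; rfl

/-- Validity of a sequent over all GL models. -/
def SValid (S : Sequent) : Prop := ∀ (M : KModel) (w : M.W), ∃ F ∈ S, Sat M w F

end Semantics
section Soundness

lemma svalid_and_left {A B : Fml} {Δ : Sequent} (h : SValid (Fml.and A B ::ₘ Δ)) :
    SValid (A ::ₘ Δ) := by
  intro M w
  obtain ⟨F, hF, hs⟩ := h M w
  rw [Multiset.mem_cons] at hF
  rcases hF with rfl | hF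
  · exact ⟨A, Multiset.mem_cons_self _ _, hs.1⟩
  · exact ⟨F, Multiset.mem_cons_of_mem hF, hs⟩

lemma svalid_and_right {A B : Fml} {Δ : Sequent} (h : SValid (Fml.and A B ::ₘ Δ)) :
    SValid (B ::ₘ Δ) := by
  intro M w
  obtain ⟨F, hF, hs⟩ := h M w
  rw [Multiset.mem_cons] at hF
  rcases hF with rfl | hF
  · exact ⟨B, Multiset.mem_cons_self _ _, hs.2⟩
  · exact ⟨F, Multiset.mem_cons_of_mem hF, hs⟩

lemma svalid_or_inv {A B : Fml} {Δ : Sequent} (h : SValid (Fml.or A B ::ₘ Δ)) :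
    SValid (A ::ₘ B ::ₘ Δ) := by
  intro M w
  obtain ⟨F, hF, hs⟩ := h M w
  rw [Multiset.mem_cons] at hF
  rcases hF with rfl | hF
  · rcases hs with hs | hs
    · exact ⟨A, Multiset.mem_cons_self _ _, hs⟩
    · exact ⟨B, Multiset.mem_cons_of_mem (Multiset.mem_cons_self _ _), hs⟩
  · exact ⟨F, Multiset.mem_cons_of_mem (Multiset.mem_cons_of_mem hF), hs⟩

theorem glseq_svalid {S : Sequent} (h : GLSeq S) : SValid S := by
  induction h with
  | axA Γ A =>
    intro M w
    by_cases hA : Sat M w A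
    · exact ⟨A, Multiset.mem_cons_self _ _, hA⟩
    · exact ⟨A.negation, Multiset.mem_cons_of_mem (Multiset.mem_cons_self _ _),
        (sat_negation M A w).2 hA⟩
  | axTop Γ => exact fun M w => ⟨Fml.top, Multiset.mem_cons_self _ _, trivial⟩
  | andR h1 h2 ih1 ih2 =>
    rename_i Γ A B
    intro M w
    obtain ⟨F, hF, hs⟩ := ih1 M w
    rw [Multiset.mem_cons] at hF
    rcases hF with rfl | hF
    · obtain ⟨G, hG, hsG⟩ := ih2 M w
      rw [Multiset.mem_cons] at hG
      rcases hG with rfl | hG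
      · exact ⟨Fml.and F G, Multiset.mem_cons_self _ _, ⟨hs, hsG⟩⟩
      · exact ⟨G, Multiset.mem_cons_of_mem hG, hsG⟩
    · exact ⟨F, Multiset.mem_cons_of_mem hF, hs⟩
  | orR h ih =>
    rename_i Γ A B
    intro M w
    obtain ⟨F, hF, hs⟩ := ih M w
    rw [Multiset.mem_cons, Multiset.mem_cons] at hF
    rcases hF with rfl | rfl | hF
    · exact ⟨Fml.or F B, Multiset.mem_cons_self _ _, Or.inl hs⟩
    · exact ⟨Fml.or A F, Multiset.mem_cons_self _ _, Or.inr hs⟩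
    · exact ⟨F, Multiset.mem_cons_of_mem hF, hs⟩
  | boxGL h ih =>
    rename_i Γ Δ A
    intro M w
    by_contra hc
    push_neg at hc
    have hboxA : ¬ Sat M w (Fml.box A) := hc _ (Multiset.mem_cons_self _ _)
    have hex : ∃ v, M.R w v ∧ ¬ Sat M v A := by
      simp only [Sat] at hboxA; push_neg at hboxA; exact hboxA
    obtain ⟨m, hm, hmax⟩ := M.cwf.has_min {u | M.R w u ∧ ¬ Sat M u A} hex
    obtain ⟨hRwm, hmA⟩ := hm
    obtain ⟨F, hF, hsF⟩ := ih M m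
    rw [Multiset.mem_cons, Multiset.mem_cons, Multiset.mem_add] at hF
    rcases hF with rfl | rfl | hF | hF
    · exact hmA hsF
    · obtain ⟨u, hmu, hu⟩ := hsF
      have : ¬ Sat M u A := (sat_negation M A u).1 hu
      exact hmax u ⟨M.trans hRwm hmu, this⟩ hmu
    · -- F ∈ Γ, but ◇F is refuted at w
      have hdia : ¬ Sat M w (Fml.dia F) := by
        refine hc _ (Multiset.mem_cons_of_mem (Multiset.mem_add.2 (Or.inl ?_)))
        exact Multiset.mem_map_of_mem _ hF
      exact hdia ⟨m, hRwm, hsF⟩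
    · -- F ∈ diaS Γ : F = dia G with G ∈ Γ
      rw [diaS, Multiset.mem_map] at hF
      obtain ⟨G, hG, rfl⟩ := hF
      obtain ⟨u, hmu, hu⟩ := hsF
      have hdia : ¬ Sat M w (Fml.dia G) := by
        refine hc _ (Multiset.mem_cons_of_mem (Multiset.mem_add.2 (Or.inl ?_)))
        exact Multiset.mem_map_of_mem _ hG
      exact hdia ⟨u, M.trans hRwm hmu, hu⟩

end Soundness
section Glue

/-- Is a formula a diamond? -/
def Fml.isDia : Fml → Bool
  | .dia _ => true
  | _ => false

def undiaF : Fml → Option Fml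
  | .dia B => some B
  | _ => none

/-- The multiset of bodies of diamond formulas. -/
def undia (S : Sequent) : Sequent := S.filterMap undiaF

/-- The non-diamond part. -/
def nondia (S : Sequent) : Sequent := S.filter (fun F => F.isDia = false)

lemma split_dia (S : Sequent) : diaS (undia S) + nondia S = S := by
  induction S using Multiset.induction_on with
  | empty => simp [undia, nondia, diaS]
  | cons a s ih =>
    cases a with
    | dia B =>
      rw [undia, Multiset.filterMap_cons_some undiaF _ _ (show undiaF (Fml.dia B) = some B from rfl), ← undia, nondia,
        Multiset.filter_cons_of_neg _ (by simp [Fml.isDia]), ← nondia, diaS,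
        Multiset.map_cons, ← diaS, Multiset.cons_add, ih]
    | pos n => rw [undia, Multiset.filterMap_cons_none _ _ (show undiaF (Fml.pos n) = none from rfl), ← undia, nondia,
        Multiset.filter_cons_of_pos _ (by simp [Fml.isDia]), ← nondia,
        Multiset.add_cons, ih]
    | neg n => rw [undia, Multiset.filterMap_cons_none _ _ (show undiaF (Fml.neg n) = none from rfl), ← undia, nondia,
        Multiset.filter_cons_of_pos _ (by simp [Fml.isDia]), ← nondia,
        Multiset.add_cons, ih]
    | top => rw [undia, Multiset.filterMap_cons_none _ _ (show undiaF (Fml.top) = none from rfl), ← undia, nondia,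
        Multiset.filter_cons_of_pos _ (by simp [Fml.isDia]), ← nondia,
        Multiset.add_cons, ih]
    | bot => rw [undia, Multiset.filterMap_cons_none _ _ (show undiaF (Fml.bot) = none from rfl), ← undia, nondia,
        Multiset.filter_cons_of_pos _ (by simp [Fml.isDia]), ← nondia,
        Multiset.add_cons, ih]
    | and A B => rw [undia, Multiset.filterMap_cons_none _ _ (show undiaF (Fml.and A B) = none from rfl), ← undia, nondia,
        Multiset.filter_cons_of_pos _ (by simp [Fml.isDia]), ← nondia,
        Multiset.add_cons, ih]
    | or A B => rw [undia, Multiset.filterMap_cons_none _ _ (show undiaF (Fml.or A B) = none from rfl), ← undia, nondia,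
        Multiset.filter_cons_of_pos _ (by simp [Fml.isDia]), ← nondia,
        Multiset.add_cons, ih]
    | box A => rw [undia, Multiset.filterMap_cons_none _ _ (show undiaF (Fml.box A) = none from rfl), ← undia, nondia,
        Multiset.filter_cons_of_pos _ (by simp [Fml.isDia]), ← nondia,
        Multiset.add_cons, ih]

lemma mem_undia {B : Fml} {S : Sequent} (h : Fml.dia B ∈ S) : B ∈ undia S := by
  rw [undia, Multiset.mem_filterMap]
  exact ⟨Fml.dia B, h, rfl⟩

lemma undia_erase_box {B : Fml} {S : Sequent} (h : Fml.box B ∈ S) :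
    undia (S.erase (Fml.box B)) = undia S := by
  conv_rhs => rw [← Multiset.cons_erase h]
  rw [undia, undia, Multiset.filterMap_cons_none _ _ (show undiaF (Fml.box B) = none from rfl)]

/-- Glue a family of models below a fresh root. -/
def glueR (ι : Type) (M : ι → KModel) (w : ∀ i, (M i).W) :
    Option ((i : ι) × (M i).W) → Option ((i : ι) × (M i).W) → Prop :=
  fun a b => ∃ (j : ι) (y : (M j).W), b = some ⟨j, y⟩ ∧
    ((a = none ∧ (y = w j ∨ (M j).R (w j) y)) ∨ (∃ x, a = some ⟨j, x⟩ ∧ (M j).R x y))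

def glue (ι : Type) (M : ι → KModel) (w : ∀ i, (M i).W) (v0 : ℕ → Bool) : KModel where
  W := Option ((i : ι) × (M i).W)
  R := glueR ι M w
  trans := by
    rintro a b c ⟨j, y, rfl, hab⟩ ⟨k, z, rfl, hbc⟩
    rcases hbc with ⟨hb, _⟩ | ⟨x, hb, hR⟩
    · exact absurd hb (by simp)
    · rw [Option.some_inj] at hb
      obtain ⟨hjk, hyx⟩ := Sigma.mk.inj_iff.1 hb
      subst hjk
      rw [heq_iff_eq] at hyx
      subst hyx
      rcases hab with ⟨rfl, hy⟩ | ⟨x0, rfl, hR0⟩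
      · refine ⟨_, z, rfl, Or.inl ⟨rfl, ?_⟩⟩
        rcases hy with rfl | hy
        · exact Or.inr hR
        · exact Or.inr ((M _).trans hy hR)
      · exact ⟨_, z, rfl, Or.inr ⟨x0, rfl, (M _).trans hR0 hR⟩⟩
  cwf := by
    have haux : ∀ (j : ι) (y : (M j).W),
        Acc (fun a b => glueR ι M w b a) (some ⟨j, y⟩) := by
      intro j y
      induction y using WellFounded.induction (M j).cwf with
      | _ x ihx =>
        constructor
        rintro b ⟨k, z, rfl, hb⟩
        rcases hb with ⟨h, _⟩ | ⟨x', hx', hR⟩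
        · exact absurd h (by simp)
        · rw [Option.some_inj] at hx'
          obtain ⟨hjk, hxx⟩ := Sigma.mk.inj_iff.1 hx'
          subst hjk
          rw [heq_iff_eq] at hxx
          subst hxx
          exact ihx z hR
    constructor
    intro a
    cases a with
    | none =>
      constructor
      rintro b ⟨k, z, rfl, _⟩
      exact haux k z
    | some p => exact haux p.1 p.2
  val := fun a n => match a with
    | none => v0 n
    | some p => (M p.1).val p.2 n

lemma sat_glue (ι : Type) (M : ι → KModel) (w : ∀ i, (M i).W) (v0 : ℕ → Bool) (F : Fml) :
    ∀ (j : ι) (y : (M j).W), Sat (glue ι M w v0) (some ⟨j, y⟩) F ↔ Sat (M j) y F := by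
  induction F with
  | pos n => intro j y; simp [Sat, glue]
  | neg n => intro j y; simp [Sat, glue]
  | top => intro j y; simp [Sat]
  | bot => intro j y; simp [Sat]
  | and A B ihA ihB => intro j y; simp only [Sat, ihA, ihB]
  | or A B ihA ihB => intro j y; simp only [Sat, ihA, ihB]
  | box A ih =>
    intro j y
    simp only [Sat]
    constructor
    · intro hall z hz
      rw [← ih j z]
      exact hall (some ⟨j, z⟩) ⟨j, z, rfl, Or.inr ⟨y, rfl, hz⟩⟩
    · rintro hall b ⟨k, z, rfl, hb⟩
      rcases hb with ⟨h, _⟩ | ⟨x, hx, hR⟩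
      · exact absurd h (by simp)
      · rw [Option.some_inj] at hx
        obtain ⟨hjk, hyx⟩ := Sigma.mk.inj_iff.1 hx
        subst hjk
        rw [heq_iff_eq] at hyx
        subst hyx
        exact (ih _ z).2 (hall z hR)
  | dia A ih =>
    intro j y
    simp only [Sat]
    constructor
    · rintro ⟨b, ⟨k, z, rfl, hb⟩, hsat⟩
      rcases hb with ⟨h, _⟩ | ⟨x, hx, hR⟩
      · exact absurd h (by simp)
      · rw [Option.some_inj] at hx
        obtain ⟨hjk, hyx⟩ := Sigma.mk.inj_iff.1 hx
        subst hjk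
        rw [heq_iff_eq] at hyx
        subst hyx
        exact ⟨z, hR, (ih _ z).1 hsat⟩
    · rintro ⟨z, hz, hsat⟩
      exact ⟨some ⟨j, z⟩, ⟨j, z, rfl, Or.inr ⟨y, rfl, hz⟩⟩, (ih j z).2 hsat⟩

end Glue
theorem svalid_infstep (S : Sequent) (h : SValid S) : InfStep {Δ | SValid Δ} S := by
  classical
  by_cases htop : Fml.top ∈ S
  · exact Or.inr (Or.inl ⟨S.erase Fml.top, (Multiset.cons_erase htop).symm⟩)
  by_cases hax : ∃ A, A ∈ S ∧ A.negation ∈ S.erase A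
  · obtain ⟨A, h1, h2⟩ := hax
    refine Or.inl ⟨(S.erase A).erase A.negation, A, ?_⟩
    rw [Multiset.cons_erase h2, Multiset.cons_erase h1]
  by_cases hand : ∃ A B, Fml.and A B ∈ S
  · obtain ⟨A, B, hAB⟩ := hand
    refine Or.inr (Or.inr (Or.inl ⟨S.erase (Fml.and A B), A, B,
      (Multiset.cons_erase hAB).symm, ?_, ?_⟩))
    · exact svalid_and_left (by rwa [Multiset.cons_erase hAB])
    · exact svalid_and_right (by rwa [Multiset.cons_erase hAB])
  by_cases hor : ∃ A B, Fml.or A B ∈ S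
  · obtain ⟨A, B, hAB⟩ := hor
    refine Or.inr (Or.inr (Or.inr (Or.inl ⟨S.erase (Fml.or A B), A, B,
      (Multiset.cons_erase hAB).symm, ?_⟩)))
    exact svalid_or_inv (by rwa [Multiset.cons_erase hAB])
  have key : ∃ B, Fml.box B ∈ S ∧ SValid (B ::ₘ (undia S + diaS (undia S))) := by
    by_contra hno
    push_neg at hno
    have hc : ∀ i : {B : Fml // Fml.box B ∈ S}, ∃ (M : KModel) (w : M.W),
        ∀ F ∈ (i.1 ::ₘ (undia S + diaS (undia S))), ¬ Sat M w F := by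
      intro i
      have h' := hno i.1 i.2
      rw [SValid] at h'
      push_neg at h'
      exact h'
    choose M w hw using hc
    obtain ⟨F, hF, hsF⟩ := h (glue {B : Fml // Fml.box B ∈ S} M w
      (fun n => decide (Fml.neg n ∈ S))) none
    cases F with
    | pos n =>
      have hmem : Fml.neg n ∈ S := by
        have hv : decide (Fml.neg n ∈ S) = true := hsF
        exact of_decide_eq_true hv
      refine hax ⟨Fml.pos n, hF, ?_⟩
      rw [show (Fml.pos n).negation = Fml.neg n from rfl]
      exact (Multiset.mem_erase_of_ne (by simp)).2 hmem
    | neg n =>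
      exact hsF (by simp [hF] : decide (Fml.neg n ∈ S) = true)
    | top => exact htop hF
    | bot => exact hsF
    | and A B => exact hand ⟨A, B, hF⟩
    | or A B => exact hor ⟨A, B, hF⟩
    | box B =>
      have hsucc : Sat (glue {B : Fml // Fml.box B ∈ S} M w (fun n => decide (Fml.neg n ∈ S))) (some ⟨⟨B, hF⟩, w ⟨B, hF⟩⟩) B :=
        hsF _ ⟨⟨B, hF⟩, w ⟨B, hF⟩, rfl, Or.inl ⟨rfl, Or.inl rfl⟩⟩
      have hMB := (sat_glue _ M w _ B ⟨B, hF⟩ (w ⟨B, hF⟩)).1 hsucc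
      exact hw ⟨B, hF⟩ B (Multiset.mem_cons_self _ _) hMB
    | dia C =>
      obtain ⟨b, hb, hsb⟩ := hsF
      obtain ⟨i, x, rfl, hbr⟩ := hb
      have hxC : Sat (M i) x C := (sat_glue _ M w _ C i x).1 hsb
      have hCmem : C ∈ undia S := mem_undia hF
      have h1 : ¬ Sat (M i) (w i) C :=
        hw i C (Multiset.mem_cons_of_mem (Multiset.mem_add.2 (Or.inl hCmem)))
      have h2 : ¬ Sat (M i) (w i) (Fml.dia C) :=
        hw i _ (Multiset.mem_cons_of_mem (Multiset.mem_add.2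
          (Or.inr (Multiset.mem_map_of_mem _ hCmem))))
      rcases hbr with ⟨_, (rfl | hR)⟩ | ⟨x0, hx0, _⟩
      · exact h1 hxC
      · exact h2 ⟨x, hR, hxC⟩
      · exact absurd hx0 (by simp)
  obtain ⟨B, hB, hval⟩ := key
  refine Or.inr (Or.inr (Or.inr (Or.inr ⟨undia (S.erase (Fml.box B)),
    nondia (S.erase (Fml.box B)), B, ?_, ?_⟩)))
  · rw [split_dia (S.erase (Fml.box B)), Multiset.cons_erase hB]
  · show SValid _
    rw [undia_erase_box hB]
    exact hval

theorem GLSeq_to_GLInf (Γ : Sequent) (h : GLSeq Γ) : GLInf Γ := by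
  exact ⟨{Δ | SValid Δ}, glseq_svalid h, fun Δ hΔ => svalid_infstep Δ hΔ⟩
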